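/- For n+1 ≥ m, the polynomial P_{n,m}(x) = x^{-α-ν} d^m/dx^m[x^{m+α+ν} L_{n+m}^{(α)}(x)] equals ((α+1)_{n+m} (α+ν+1)_m / (n+m)!) · ₂F₂(-n-m, m+α+ν+1; α+1, α+ν+1; x). -/

import Mathlib

open MeasureTheory Set

/-- Pochhammer symbol `(z)_n = z(z+1)⋯(z+n-1)`. -/
noncomputable def poch (z : ℝ) (n : ℕ) : ℝ := ∏ i ∈ Finset.range n, (z + i)

/-- The confluent hypergeometric series `₁F₁(a;b;x)`. -/
noncomputable def F1 (a b x : ℝ) : ℝ :=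
  ∑' k : ℕ, poch a k / poch b k * x ^ k / k.factorial

/-- The generalized hypergeometric series `₂F₂(a₁,a₂;b₁,b₂;x)`. -/
noncomputable def F2 (a₁ a₂ b₁ b₂ x : ℝ) : ℝ :=
  ∑' k : ℕ, poch a₁ k * poch a₂ k / (poch b₁ k * poch b₂ k) * x ^ k / k.factorial

/-- Laguerre polynomial `L_k^{(α)}(x) = ((α+1)_k/k!) ₁F₁(-k;α+1;x)`. -/
noncomputable def Lag (k : ℕ) (α : ℝ) (x : ℝ) : ℝ :=
  poch (α + 1) k / k.factorial * F1 (-(k : ℝ)) (α + 1) x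

/-- The type II polynomial via the differentiation formula. -/
noncomputable def PII (n m : ℕ) (α ν : ℝ) (x : ℝ) : ℝ :=
  x ^ (-(α + ν)) * iteratedDeriv m (fun t => t ^ ((m : ℝ) + α + ν) * Lag (n + m) α t) x

lemma poch_pos {z : ℝ} (hz : 0 < z) (n : ℕ) : 0 < poch z n :=
  Finset.prod_pos fun i _ => by positivity

lemma poch_add (z : ℝ) (a b : ℕ) : poch z (a + b) = poch z a * poch (z + a) b := by
  unfold poch
  rw [Finset.prod_range_add]
  congr 1
  refine Finset.prod_congr rfl fun i _ => ?_
  push_cast; ring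

lemma poch_neg_eq_zero {N k : ℕ} (h : N < k) : poch (-(N : ℝ)) k = 0 := by
  unfold poch
  exact Finset.prod_eq_zero (Finset.mem_range.2 h) (by push_cast; ring)

lemma F1_trunc (N : ℕ) (b x : ℝ) :
    F1 (-(N : ℝ)) b x = ∑ k ∈ Finset.range (N + 1),
      poch (-(N : ℝ)) k / poch b k * x ^ k / k.factorial := by
  unfold F1
  refine tsum_eq_sum fun k hk => ?_
  simp only [Finset.mem_range, not_lt] at hk
  rw [poch_neg_eq_zero (by omega)]
  simp

lemma F2_trunc (N : ℕ) (a₂ b₁ b₂ x : ℝ) :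
    F2 (-(N : ℝ)) a₂ b₁ b₂ x = ∑ k ∈ Finset.range (N + 1),
      poch (-(N : ℝ)) k * poch a₂ k / (poch b₁ k * poch b₂ k) * x ^ k / k.factorial := by
  unfold F2
  refine tsum_eq_sum fun k hk => ?_
  simp only [Finset.mem_range, not_lt] at hk
  rw [poch_neg_eq_zero (by omega)]
  simp

lemma iteratedDeriv_sum_rpow (s : Finset ℕ) (c r : ℕ → ℝ) (f : ℝ → ℝ)
    (hf : ∀ t ∈ Ioi (0:ℝ), f t = ∑ j ∈ s, c j * t ^ (r j)) :
    ∀ m : ℕ, ∀ x ∈ Ioi (0:ℝ), iteratedDeriv m f x =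
      ∑ j ∈ s, c j * (∏ i ∈ Finset.range m, (r j - i)) * x ^ (r j - m) := by
  intro m
  induction m with
  | zero =>
    intro x hx
    simpa using hf x hx
  | succ m ih =>
    intro x hx
    rw [iteratedDeriv_succ]
    have hev : iteratedDeriv m f =ᶠ[nhds x]
        (fun y => ∑ j ∈ s, c j * (∏ i ∈ Finset.range m, (r j - i)) * y ^ (r j - m)) := by
      filter_upwards [isOpen_Ioi.mem_nhds hx] with y hy using ih y hy
    rw [hev.deriv_eq]
    have hd : HasDerivAt (fun y : ℝ => ∑ j ∈ s, c j * (∏ i ∈ Finset.range m, (r j - i)) * y ^ (r j - m))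
        (∑ j ∈ s, c j * (∏ i ∈ Finset.range m, (r j - i)) * ((r j - m) * x ^ (r j - m - 1))) x := by
      refine HasDerivAt.fun_sum fun j _ => ?_
      exact (Real.hasDerivAt_rpow_const (Or.inl (ne_of_gt hx))).const_mul _
    rw [hd.deriv]
    refine Finset.sum_congr rfl fun j _ => ?_
    rw [Finset.prod_range_succ,
      show ((m + 1 : ℕ) : ℝ) = (m : ℝ) + 1 by push_cast; ring,
      show r j - ((m:ℝ) + 1) = r j - (m:ℝ) - 1 by ring]
    ring

lemma prod_shift (a : ℝ) (m : ℕ) :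
    ∏ i ∈ Finset.range m, (a + m - 1 - i) = poch a m := by
  unfold poch
  rw [← Finset.prod_range_reflect]
  refine Finset.prod_congr rfl fun j hj => ?_
  have hj' : j < m := Finset.mem_range.1 hj
  have : ((m - 1 - j : ℕ) : ℝ) = (m : ℝ) - 1 - j := by
    have : m - 1 - j = m - (1 + j) := by omega
    rw [this, Nat.cast_sub (by omega)]
    push_cast; ring
  rw [this]; ring

/-- `P_{n,m}(x) = ((α+1)_{n+m}(α+ν+1)_m/(n+m)!) ₂F₂(-n-m, m+α+ν+1; α+1, α+ν+1; x)`. -/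
theorem PII_hypergeometric (n m : ℕ) (hnm : m ≤ n + 1) (α ν : ℝ)
    (hα : -1 < α) (hαν : -1 < α + ν) (x : ℝ) (hx : 0 < x) :
    PII n m α ν x =
      poch (α + 1) (n + m) * poch (α + ν + 1) m / (n + m).factorial *
        F2 (-((n : ℝ) + (m : ℝ))) ((m : ℝ) + α + ν + 1) (α + 1) (α + ν + 1) x := by
  have hα1 : (0:ℝ) < α + 1 := by linarith
  have hαν1 : (0:ℝ) < α + ν + 1 := by linarith
  set N := n + m with hN
  have hcast : -((n : ℝ) + (m : ℝ)) = -(N : ℝ) := by push_cast [hN]; ring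
  set c : ℕ → ℝ := fun k =>
    poch (α+1) N / N.factorial * (poch (-(N:ℝ)) k / poch (α+1) k / k.factorial) with hc
  have hf : ∀ t ∈ Ioi (0:ℝ), t ^ ((m : ℝ) + α + ν) * Lag N α t
      = ∑ k ∈ Finset.range (N+1), c k * t ^ ((k:ℝ) + ((m:ℝ) + α + ν)) := by
    intro t ht
    have ht' : (0:ℝ) < t := ht
    rw [Lag, F1_trunc, Finset.mul_sum, Finset.mul_sum]
    refine Finset.sum_congr rfl fun k _ => ?_
    have hpow : t ^ ((k:ℝ) + ((m:ℝ) + α + ν)) = t ^ ((m:ℝ) + α + ν) * t ^ k := by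
      rw [← Real.rpow_natCast t k, ← Real.rpow_add ht']
      congr 1; ring
    rw [hc, hpow]
    ring
  have hder := iteratedDeriv_sum_rpow (Finset.range (N+1)) c
      (fun k => (k:ℝ) + ((m:ℝ) + α + ν)) _ hf m x hx
  rw [PII, hcast, F2_trunc]
  rw [show (fun t : ℝ => t ^ ((m : ℝ) + α + ν) * Lag (n + m) α t)
      = (fun t : ℝ => t ^ ((m : ℝ) + α + ν) * Lag N α t) from rfl]
  rw [hder, Finset.mul_sum, Finset.mul_sum]
  refine Finset.sum_congr rfl fun k _ => ?_
  -- collapse the rpow factors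
  have hxpow : x ^ (-(α + ν)) * x ^ ((k:ℝ) + ((m:ℝ) + α + ν) - (m:ℝ)) = x ^ (k : ℕ) := by
    rw [← Real.rpow_add hx, ← Real.rpow_natCast x k]
    congr 1
    ring
  have hprod : (∏ i ∈ Finset.range m, ((k:ℝ) + ((m:ℝ) + α + ν) - i))
      = poch (α + ν + 1 + k) m := by
    rw [← prod_shift (α + ν + 1 + k) m]
    exact Finset.prod_congr rfl fun i _ => by ring
  have key : poch (α+ν+1) k * poch (α+ν+1+(k:ℝ)) m
      = poch (α+ν+1) m * poch (α+ν+1+(m:ℝ)) k := by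
    rw [← poch_add, ← poch_add, Nat.add_comm k m]
  have hbase : poch ((m:ℝ) + α + ν + 1) k = poch (α+ν+1+(m:ℝ)) k := by
    congr 1; ring
  have hP1 : poch (α+1) k ≠ 0 := ne_of_gt (poch_pos hα1 k)
  have hP2 : poch (α+ν+1) k ≠ 0 := ne_of_gt (poch_pos hαν1 k)
  have hk1 : (k.factorial : ℝ) ≠ 0 := Nat.cast_ne_zero.2 k.factorial_ne_zero
  have hN1 : (N.factorial : ℝ) ≠ 0 := Nat.cast_ne_zero.2 N.factorial_ne_zero
  rw [hprod, hbase, hc]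
  rw [show x ^ (-(α + ν)) * ((poch (α+1) N / N.factorial * (poch (-(N:ℝ)) k / poch (α+1) k / k.factorial)
        * poch (α + ν + 1 + (k:ℝ)) m) * x ^ ((k:ℝ) + ((m:ℝ) + α + ν) - (m:ℝ)))
      = poch (α+1) N / N.factorial * (poch (-(N:ℝ)) k / poch (α+1) k / k.factorial)
        * poch (α + ν + 1 + (k:ℝ)) m
        * (x ^ (-(α + ν)) * x ^ ((k:ℝ) + ((m:ℝ) + α + ν) - (m:ℝ))) by ring,
    hxpow]
  field_simp
  linear_combination (poch (α+1) N * poch (-(N:ℝ)) k) * key
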